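/- The braid word σ_2 σ_1^{a+1} σ_2 σ_1^{b+1} σ_2 σ_1^{c+1} in the 3-strand braid group equals Δ σ_1 σ_2^a σ_1^{b-1} σ_2^c Δ, where Δ = σ_1 σ_2 σ_1 is the half twist, for all a, c ≥ 0 and b ≥ 1. -/
import Mathlib


/-- In the 3-strand braid group (or any group with two elements satisfying
the braid relation `σ₁σ₂σ₁ = σ₂σ₁σ₂`), with `Δ = σ₁σ₂σ₁` the half twist,
`σ₂ σ₁^{a+1} σ₂ σ₁^{b+1} σ₂ σ₁^{c+1} = Δ σ₁ σ₂^a σ₁^{b-1} σ₂^c Δ`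
for all `a, c ≥ 0` and `b ≥ 1`. -/
theorem braid_word_half_twist {G : Type*} [Group G] (s₁ s₂ : G)
    (hbraid : s₁ * s₂ * s₁ = s₂ * s₁ * s₂) (a b c : ℕ) (hb : 1 ≤ b) :
    s₂ * s₁ ^ (a + 1) * s₂ * s₁ ^ (b + 1) * s₂ * s₁ ^ (c + 1) =
      (s₁ * s₂ * s₁) * s₁ * s₂ ^ a * s₁ ^ (b - 1) * s₂ ^ c * (s₁ * s₂ * s₁) := by
  obtain ⟨k, rfl⟩ : ∃ k, b = k + 1 := ⟨b - 1, (Nat.succ_pred_eq_of_pos hb).symm⟩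
  simp only [Nat.add_sub_cancel]
  have e1 : (s₁ * s₂ * s₁) * s₁ = s₂ * (s₁ * s₂ * s₁) := by
    conv_lhs => rw [hbraid]
    group
  have e2 : (s₁ * s₂ * s₁) * s₂ = s₁ * (s₁ * s₂ * s₁) := by
    conv_rhs => rw [hbraid]
    group
  have p1 : ∀ n : ℕ, (s₁ * s₂ * s₁) * s₁ ^ n = s₂ ^ n * (s₁ * s₂ * s₁) := by
    intro n
    induction n with
    | zero => simp
    | succ m ih =>
      rw [pow_succ, pow_succ, ← mul_assoc, ih, mul_assoc, e1, ← mul_assoc]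
  have p2 : ∀ n : ℕ, (s₁ * s₂ * s₁) * s₂ ^ n = s₁ ^ n * (s₁ * s₂ * s₁) := by
    intro n
    induction n with
    | zero => simp
    | succ m ih =>
      rw [pow_succ, pow_succ, ← mul_assoc, ih, mul_assoc, e2, ← mul_assoc]
  calc s₂ * s₁ ^ (a + 1) * s₂ * s₁ ^ (k + 1 + 1) * s₂ * s₁ ^ (c + 1)
      = s₂ * s₁ ^ a * ((s₁ * s₂ * s₁) * s₁ ^ (k + 1)) * s₂ * s₁ ^ (c + 1) := by
        rw [pow_succ s₁ a, pow_succ' s₁ (k + 1)]; group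
    _ = s₂ * s₁ ^ a * (s₂ ^ (k + 1) * (s₁ * s₂ * s₁)) * s₂ * s₁ ^ (c + 1) := by
        rw [p1 (k + 1)]
    _ = s₂ * s₁ ^ a * s₂ ^ (k + 1) * (((s₁ * s₂ * s₁) * s₂) * s₁ ^ (c + 1)) := by
        group
    _ = s₂ * s₁ ^ a * s₂ ^ (k + 1) * (s₁ * ((s₁ * s₂ * s₁) * s₁ ^ (c + 1))) := by
        rw [e2]; group
    _ = s₂ * s₁ ^ a * s₂ ^ (k + 1) * (s₁ * (s₂ ^ (c + 1) * (s₁ * s₂ * s₁))) := by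
        rw [p1 (c + 1)]
    _ = s₂ * s₁ ^ a * s₂ ^ k * ((s₂ * s₁ * s₂) * (s₂ ^ c * (s₁ * s₂ * s₁))) := by
        rw [pow_succ s₂ k, pow_succ' s₂ c]; group
    _ = s₂ * s₁ ^ a * s₂ ^ k * (((s₁ * s₂ * s₁) * s₂ ^ c) * (s₁ * s₂ * s₁)) := by
        rw [← hbraid]; group
    _ = s₂ * s₁ ^ a * s₂ ^ k * s₁ ^ c * ((s₁ * s₂ * s₁) * (s₁ * s₂ * s₁)) := by
        rw [p2 c]; group
    _ = s₂ * s₁ ^ a * s₂ ^ k * (((s₁ * s₂ * s₁) * s₂ ^ c) * (s₁ * s₂ * s₁)) := by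
        rw [p2 c]; group
    _ = s₂ * s₁ ^ a * (((s₁ * s₂ * s₁) * s₁ ^ k) * s₂ ^ c * (s₁ * s₂ * s₁)) := by
        rw [p1 k]; group
    _ = s₂ * (((s₁ * s₂ * s₁) * s₂ ^ a) * s₁ ^ k * s₂ ^ c * (s₁ * s₂ * s₁)) := by
        rw [p2 a]; group
    _ = (s₁ * s₂ * s₁) * s₁ * s₂ ^ a * s₁ ^ k * s₂ ^ c * (s₁ * s₂ * s₁) := by
        rw [e1]; group
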